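/- arXiv:2602.17894 — 7 statements merged into one kernel-verified Lean document; each statement's English description precedes it below -/
import Mathlib

section
/- For every C > 0, the integral ∫_{C+3}^{∞} (φ(x+C) − φ(x−C))² / (Φ(x+C) − Φ(x−C)) dx is at most 0.02. -/
open MeasureTheory

/-- The standard normal density. -/
noncomputable def gaussPdf (x : ℝ) : ℝ :=
  (Real.sqrt (2 * Real.pi))⁻¹ * Real.exp (-(x ^ 2) / 2)

/-- The standard normal CDF. -/
noncomputable def gaussCdf (x : ℝ) : ℝ :=
  ∫ t in Set.Iic x, gaussPdf t

open Set Real Filter Topology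

/-!
After the substitution `a = x - C`, with `h = 2C`, the integrand is
`(φ(a+h) - φ(a))² / (Φ(a+h) - Φ(a))`. For `a ≥ 3` put `δ = min(h, 1/a)`. Since
`φ(a+δ) = φ(a) e^{-(aδ + δ²/2)}` and `aδ + δ²/2 ≤ (19/18) aδ ≤ 19/18`, the denominator is at least
`e^{-19/18} δ φ(a)`, while the numerator is at most `(19/18)² aδ φ(a)²` (trivially if `δ = 1/a`,
and by `1 - e^{-u} ≤ u` if `δ = h`). So the integrand is at most `(19/18)² e^{19/18} a φ(a)`,
whose integral over `(3, ∞)` is `(19/18)² e^{19/18} φ(3) < 0.017`.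
-/

lemma gaussPdf_pos (x : ℝ) : 0 < gaussPdf x := by
  unfold gaussPdf
  positivity

lemma integrable_gaussPdf : Integrable gaussPdf := by
  convert (integrable_exp_neg_mul_sq (by norm_num : (0 : ℝ) < 1 / 2)).const_mul
    (√(2 * π))⁻¹ using 2 with x
  unfold gaussPdf
  ring_nf

lemma gaussPdf_le_gaussPdf {s t : ℝ} (hs : 0 ≤ s) (hst : s ≤ t) : gaussPdf t ≤ gaussPdf s := by
  unfold gaussPdf
  gcongr

lemma gaussPdf_add (a d : ℝ) : gaussPdf (a + d) = gaussPdf a * exp (-(a * d + d ^ 2 / 2)) := by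
  unfold gaussPdf
  rw [mul_assoc, ← exp_add]
  ring_nf

lemma hasDerivAt_gaussPdf (x : ℝ) : HasDerivAt gaussPdf (-(x * gaussPdf x)) x := by
  have h : HasDerivAt (fun y : ℝ => -(y ^ 2) / 2) (-x) x :=
    ((hasDerivAt_pow 2 x).neg.div_const 2).congr_deriv (by ring)
  refine (h.exp.const_mul (√(2 * π))⁻¹).congr_deriv ?_
  rw [gaussPdf]
  ring

lemma tendsto_gaussPdf_atTop : Tendsto gaussPdf atTop (𝓝 0) := by
  have h : Tendsto (fun x : ℝ => exp (-(x ^ 2) / 2)) atTop (𝓝 0) := by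
    refine tendsto_exp_comp_nhds_zero.2 ?_
    simp only [neg_div]
    exact tendsto_neg_atTop_atBot.comp
      ((tendsto_pow_atTop two_ne_zero).atTop_div_const two_pos)
  have h' := h.const_mul (√(2 * π))⁻¹
  rwa [mul_zero] at h'

lemma integrableOn_Ioi_mul_gaussPdf {b : ℝ} (hb : 0 ≤ b) :
    IntegrableOn (fun x => x * gaussPdf x) (Ioi b) :=
  integrableOn_Ioi_deriv_of_nonneg' (g := fun x => -gaussPdf x)
    (fun x _ => (hasDerivAt_gaussPdf x).neg.congr_deriv (neg_neg _))
    (fun x hx => mul_nonneg (hb.trans hx.le) (gaussPdf_pos x).le)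
    (by simpa using tendsto_gaussPdf_atTop.neg)

lemma integral_Ioi_mul_gaussPdf {b : ℝ} (hb : 0 ≤ b) :
    ∫ x in Ioi b, x * gaussPdf x = gaussPdf b := by
  rw [integral_Ioi_of_hasDerivAt_of_nonneg' (g := fun x => -gaussPdf x)
    (fun x _ => (hasDerivAt_gaussPdf x).neg.congr_deriv (neg_neg _))
    (fun x hx => mul_nonneg (hb.trans hx.le) (gaussPdf_pos x).le)
    (by simpa using tendsto_gaussPdf_atTop.neg)]
  ring

lemma gaussCdf_sub_eq_integral {a b : ℝ} (hab : a ≤ b) :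
    gaussCdf b - gaussCdf a = ∫ t in Ioc a b, gaussPdf t := by
  rw [gaussCdf, gaussCdf, intervalIntegral.integral_Iic_sub_Iic integrable_gaussPdf.integrableOn
    integrable_gaussPdf.integrableOn, intervalIntegral.integral_of_le hab]

lemma gaussCdf_mono : Monotone gaussCdf := fun _ _ hab =>
  setIntegral_mono_set integrable_gaussPdf.integrableOn
    (Eventually.of_forall fun t => (gaussPdf_pos t).le) (Iic_subset_Iic.2 hab).eventuallyLE

lemma mul_gaussPdf_add_le_gaussCdf_sub {a δ h : ℝ} (ha : 0 ≤ a) (hδ : 0 ≤ δ) (hδh : δ ≤ h) :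
    δ * gaussPdf (a + δ) ≤ gaussCdf (a + h) - gaussCdf a := by
  calc δ * gaussPdf (a + δ) = gaussPdf (a + δ) * volume.real (Ioc a (a + δ)) := by
        rw [Real.volume_real_Ioc_of_le (by linarith)]
        ring
    _ ≤ ∫ t in Ioc a (a + δ), gaussPdf t :=
        setIntegral_ge_of_const_le_real measurableSet_Ioc measure_Ioc_lt_top.ne
          (fun t ht => gaussPdf_le_gaussPdf (ha.trans ht.1.le) ht.2)
          integrable_gaussPdf.integrableOn
    _ = gaussCdf (a + δ) - gaussCdf a := (gaussCdf_sub_eq_integral (by linarith)).symm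
    _ ≤ gaussCdf (a + h) - gaussCdf a := by
        gcongr
        exact gaussCdf_mono (by linarith)

lemma mul_add_sq_div_two_le {a δ : ℝ} (ha : 3 ≤ a) (hδ : 0 ≤ δ) (haδ : a * δ ≤ 1) :
    a * δ + δ ^ 2 / 2 ≤ 19 / 18 * (a * δ) := by
  nlinarith [mul_le_mul_of_nonneg_right ha hδ]

lemma mul_min_inv_le_one {a : ℝ} (ha : 0 < a) (h : ℝ) : a * min h a⁻¹ ≤ 1 :=
  calc a * min h a⁻¹ ≤ a * a⁻¹ := by gcongr; exact min_le_right _ _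
    _ = 1 := mul_inv_cancel₀ ha.ne'

lemma exp_neg_mul_gaussPdf_le_gaussCdf_sub {a h : ℝ} (ha : 3 ≤ a) (hh : 0 ≤ h) :
    exp (-(19 / 18)) * (min h a⁻¹ * gaussPdf a) ≤ gaussCdf (a + h) - gaussCdf a := by
  set δ := min h a⁻¹
  have hδ : 0 ≤ δ := le_min hh (inv_nonneg.2 (by linarith))
  have haδ : a * δ ≤ 1 := mul_min_inv_le_one (by linarith) h
  have hdecay : exp (-(19 / 18)) * gaussPdf a ≤ gaussPdf (a + δ) := by
    have hφ := gaussPdf_pos a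
    rw [gaussPdf_add, mul_comm]
    gcongr
    linarith [mul_add_sq_div_two_le ha hδ haδ]
  calc exp (-(19 / 18)) * (δ * gaussPdf a) = δ * (exp (-(19 / 18)) * gaussPdf a) := by ring
    _ ≤ δ * gaussPdf (a + δ) := by gcongr
    _ ≤ gaussCdf (a + h) - gaussCdf a :=
        mul_gaussPdf_add_le_gaussCdf_sub (by linarith) hδ (min_le_left _ _)

lemma sq_gaussPdf_add_sub_le {a h : ℝ} (ha : 3 ≤ a) (hh : 0 ≤ h) :
    (gaussPdf (a + h) - gaussPdf a) ^ 2 ≤ (19 / 18) ^ 2 * (a * min h a⁻¹) * gaussPdf a ^ 2 := by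
  have ha0 : 0 < a := by linarith
  have hφ := gaussPdf_pos a
  have hφh := gaussPdf_pos (a + h)
  have hdecr : gaussPdf (a + h) ≤ gaussPdf a := gaussPdf_le_gaussPdf ha0.le (by linarith)
  rcases le_total a⁻¹ h with hah | hha
  · rw [min_eq_right hah, mul_inv_cancel₀ ha0.ne']
    nlinarith
  · have hah : a * h ≤ 1 := min_eq_left hha ▸ mul_min_inv_le_one ha0 h
    rw [min_eq_left hha]
    have hdiff : gaussPdf a - gaussPdf (a + h) ≤ 19 / 18 * (a * h) * gaussPdf a := by
      rw [gaussPdf_add]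
      nlinarith [add_one_le_exp (-(a * h + h ^ 2 / 2)), mul_add_sq_div_two_le ha hh hah]
    calc (gaussPdf (a + h) - gaussPdf a) ^ 2 = (gaussPdf a - gaussPdf (a + h)) ^ 2 := by ring
      _ ≤ (19 / 18 * (a * h) * gaussPdf a) ^ 2 := by gcongr
      _ = (19 / 18) ^ 2 * (a * h) * (a * h) * gaussPdf a ^ 2 := by ring
      _ ≤ (19 / 18) ^ 2 * (a * h) * 1 * gaussPdf a ^ 2 := by gcongr
      _ = (19 / 18) ^ 2 * (a * h) * gaussPdf a ^ 2 := by ring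

lemma sq_gaussPdf_add_sub_div_le {a h : ℝ} (ha : 3 ≤ a) (hh : 0 ≤ h) :
    (gaussPdf (a + h) - gaussPdf a) ^ 2 / (gaussCdf (a + h) - gaussCdf a) ≤
      (19 / 18) ^ 2 * exp (19 / 18) * (a * gaussPdf a) := by
  have hφ := gaussPdf_pos a
  refine div_le_of_le_mul₀ (sub_nonneg.2 (gaussCdf_mono (by linarith)))
    (mul_nonneg (by positivity) (mul_nonneg (by linarith) hφ.le)) ?_
  calc (gaussPdf (a + h) - gaussPdf a) ^ 2
      ≤ (19 / 18) ^ 2 * (a * min h a⁻¹) * gaussPdf a ^ 2 := sq_gaussPdf_add_sub_le ha hh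
    _ = (19 / 18) ^ 2 * exp (19 / 18) * (a * gaussPdf a) *
          (exp (-(19 / 18)) * (min h a⁻¹ * gaussPdf a)) := by
        rw [exp_neg]
        field_simp
    _ ≤ (19 / 18) ^ 2 * exp (19 / 18) * (a * gaussPdf a) * (gaussCdf (a + h) - gaussCdf a) := by
        gcongr
        exact exp_neg_mul_gaussPdf_le_gaussCdf_sub ha hh

lemma exp_nineteen_div_eighteen_le_three : exp (19 / 18) ≤ 3 := by
  have h : exp (1 / 18) ≤ 18 / 17 := by
    convert exp_bound_div_one_sub_of_interval (x := 1 / 18) (by norm_num) (by norm_num) using 1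
    norm_num
  calc exp (19 / 18) = exp 1 * exp (1 / 18) := by rw [← exp_add]; norm_num
    _ ≤ 2.7182818286 * (18 / 17) := by gcongr; exact exp_one_lt_d9.le
    _ ≤ 3 := by norm_num

lemma gaussPdf_three_le : gaussPdf 3 ≤ 1 / 200 := by
  have hsqrt : 2.5 ≤ √(2 * π) := (le_sqrt (by norm_num) (by positivity)).2 (by
    nlinarith [pi_gt_d2])
  have hexp : 80 ≤ exp (9 / 2) := by
    calc (80 : ℝ) ≤ 2.7182818283 ^ 4 * (1 / 2 + 1) := by norm_num
      _ ≤ exp 1 ^ 4 * exp (1 / 2) := by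
          gcongr
          exacts [exp_one_gt_d9.le, add_one_le_exp _]
      _ = exp (9 / 2) := by rw [← exp_nat_mul, ← exp_add]; norm_num
  rw [gaussPdf, show -((3 : ℝ) ^ 2) / 2 = -(9 / 2) by norm_num, exp_neg, ← mul_inv, one_div]
  gcongr
  calc (200 : ℝ) = 2.5 * 80 := by norm_num
    _ ≤ √(2 * π) * exp (9 / 2) := by gcongr

/-- For every `C > 0`,
`∫_{C+3}^∞ (φ(x+C) − φ(x−C))² / (Φ(x+C) − Φ(x−C)) dx ≤ 0.02`. -/
theorem integral_gauss_ratio_tail_le (C : ℝ) (hC : 0 < C) :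
    ∫ x in Set.Ioi (C + 3), (gaussPdf (x + C) - gaussPdf (x - C)) ^ 2 /
      (gaussCdf (x + C) - gaussCdf (x - C)) ≤ 0.02 := by
  have hshift : ∫ x in Ioi (C + 3), (gaussPdf (x + C) - gaussPdf (x - C)) ^ 2 /
        (gaussCdf (x + C) - gaussCdf (x - C)) =
      ∫ a in Ioi 3, (gaussPdf (a + 2 * C) - gaussPdf a) ^ 2 /
        (gaussCdf (a + 2 * C) - gaussCdf a) := by
    rw [add_comm C 3, ← (measurePreserving_add_right volume C).setIntegral_preimage_emb
      (measurableEmbedding_addRight C), preimage_add_const_Ioi, add_sub_cancel_right]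
    simp only [add_sub_cancel_right, add_assoc, ← two_mul]
  have h2C : 0 ≤ 2 * C := by linarith
  rw [hshift]
  calc _ ≤ ∫ a in Ioi 3, (19 / 18) ^ 2 * exp (19 / 18) * (a * gaussPdf a) := by
        refine integral_mono_of_nonneg (ae_restrict_of_forall_mem measurableSet_Ioi fun a ha => ?_)
          ((integrableOn_Ioi_mul_gaussPdf (by norm_num)).const_mul _)
          (ae_restrict_of_forall_mem measurableSet_Ioi fun a ha =>
            sq_gaussPdf_add_sub_div_le ha.le h2C)
        exact div_nonneg (sq_nonneg _) (sub_nonneg.2 (gaussCdf_mono (by linarith)))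
    _ = (19 / 18) ^ 2 * exp (19 / 18) * gaussPdf 3 := by
        rw [integral_const_mul, integral_Ioi_mul_gaussPdf (by norm_num)]
    _ ≤ (19 / 18) ^ 2 * 3 * (1 / 200) := by
        have := gaussPdf_pos 3
        gcongr
        exacts [exp_nineteen_div_eighteen_le_three, gaussPdf_three_le]
    _ ≤ 0.02 := by norm_num
end

section
/- Let d ≥ 8 be a natural number and let Ω = {±1}^d (equivalently, Fin d → Bool) with the Hamming distance H(ω, ω′) = #{i : ω_i ≠ ω′_i}. Then there exists a subset Ω′ ⊆ Ω such that (i) the cardinality of Ω′ is at least 2^{d/8} (as real numbers), and (ii) for all distinct ω, ω′ ∈ Ω′, H(ω, ω′) ≥ d/8. -/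
/-! A code in `Fin d → Bool` of minimum distance `m = ⌈d/8⌉` that is maximal under inclusion is
also a covering: the Hamming balls of radius `< m` around its words cover the cube, so it has at
least `2^d / V` words, `V = ∑_{k<m} C(d,k)` being the volume of such a ball. Comparing `V` termwise
with `8^d = ∑ C(d,k) 7^(d-k)` gives `V · 7^(d+1-m) ≤ 8^d`, and since `8^8 ≤ 14^7` this yields
`V^8 ≤ 2^(7d)`, hence at least `2^(d/8)` words. -/

open Finset

section Hamming

variable {ι : Type*} [Fintype ι]

theorem exists_pairwise_hammingDist_ge_and_covering {β : Type*} [DecidableEq β] [Fintype β]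
    {m : ℕ} (hm : 0 < m) :
    ∃ C : Finset (ι → β), (C : Set (ι → β)).Pairwise (fun x y => m ≤ hammingDist x y) ∧
      ∀ x, ∃ c ∈ C, hammingDist c x < m := by
  classical
  let IsCode : Finset (ι → β) → Prop :=
    fun C => (C : Set (ι → β)).Pairwise (fun x y => m ≤ hammingDist x y)
  obtain ⟨C, hmax⟩ := Finset.exists_maximal (s := univ.filter IsCode) ⟨∅, by simp [IsCode]⟩
  have hC : IsCode C := (mem_filter.1 hmax.prop).2
  refine ⟨C, hC, fun x => ?_⟩
  by_contra! hfar
  have hinsert : IsCode (insert x C) := by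
    simp only [IsCode, coe_insert]
    refine Set.pairwise_insert.2 ⟨hC, fun c hc _ => ⟨?_, hfar c hc⟩⟩
    rw [hammingDist_comm]
    exact hfar c hc
  have hx : x ∈ C := hmax.2 (by simpa using hinsert) (subset_insert x C) (mem_insert_self x C)
  simpa using (hfar x hx).trans_lt' hm

variable [DecidableEq ι]

theorem card_hammingDist_lt_le_sum_choose (c : ι → Bool) (m : ℕ) :
    #{x | hammingDist c x < m} ≤ ∑ k ∈ range m, (Fintype.card ι).choose k := by
  let support : (ι → Bool) → Finset ι := fun x => {i | c i ≠ x i}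
  calc #{x | hammingDist c x < m}
      ≤ #((range m).biUnion fun k => powersetCard k (univ : Finset ι)) := by
        refine card_le_card_of_injOn support (fun x hx => ?_) (fun x _ y _ hxy => ?_)
        · simpa [support, hammingDist] using hx
        · funext i
          have hi : c i ≠ x i ↔ c i ≠ y i := by simpa [support] using congrArg (i ∈ ·) hxy
          revert hi
          cases c i <;> cases x i <;> cases y i <;> simp
    _ ≤ ∑ k ∈ range m, #(powersetCard k (univ : Finset ι)) := card_biUnion_le
    _ = ∑ k ∈ range m, (Fintype.card ι).choose k := by simp [card_powersetCard]

theorem two_pow_card_le_card_mul_sum_choose_of_covering {C : Finset (ι → Bool)} {m : ℕ}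
    (hcover : ∀ x, ∃ c ∈ C, hammingDist c x < m) :
    2 ^ Fintype.card ι ≤ #C * ∑ k ∈ range m, (Fintype.card ι).choose k := by
  calc 2 ^ Fintype.card ι = #(univ : Finset (ι → Bool)) := by simp
    _ ≤ #(C.biUnion fun c => {x | hammingDist c x < m}) :=
        card_le_card fun x _ => by simpa using hcover x
    _ ≤ _ := card_biUnion_le_card_mul _ _ _ fun c _ => card_hammingDist_lt_le_sum_choose c m

end Hamming

theorem sum_range_choose_mul_pow_le {q : ℕ} (hq : 0 < q) {n m : ℕ} (hm : m ≤ n + 1) :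
    (∑ k ∈ range m, n.choose k) * q ^ (n + 1 - m) ≤ (q + 1) ^ n := by
  rw [add_comm q 1, add_pow, sum_mul]
  calc ∑ k ∈ range m, n.choose k * q ^ (n + 1 - m)
      ≤ ∑ k ∈ range m, 1 ^ k * q ^ (n - k) * n.choose k := by
        refine sum_le_sum fun k hk => ?_
        have hexp : n + 1 - m ≤ n - k := by have := mem_range.1 hk; omega
        rw [one_pow, one_mul, mul_comm]
        exact Nat.mul_le_mul_right _ (Nat.pow_le_pow_right hq hexp)
    _ ≤ ∑ k ∈ range (n + 1), 1 ^ k * q ^ (n - k) * n.choose k :=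
        sum_le_sum_of_subset (range_subset_range.2 hm)

theorem sum_range_choose_pow_eight_le (d : ℕ) :
    (∑ k ∈ range ((d + 7) / 8), d.choose k) ^ 8 ≤ 2 ^ (7 * d) := by
  set e := d + 1 - (d + 7) / 8
  have hbinom := sum_range_choose_mul_pow_le (q := 7) (by norm_num) (m := (d + 7) / 8) (n := d)
    (by omega)
  refine Nat.le_of_mul_le_mul_right ?_ (pow_pos (by norm_num : 0 < 7) (8 * e))
  calc (∑ k ∈ range ((d + 7) / 8), d.choose k) ^ 8 * 7 ^ (8 * e)
      = ((∑ k ∈ range ((d + 7) / 8), d.choose k) * 7 ^ e) ^ 8 := by ring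
    _ ≤ ((7 + 1) ^ d) ^ 8 := Nat.pow_le_pow_left hbinom 8
    _ = (8 ^ 8) ^ d := by rw [← pow_mul, ← pow_mul, mul_comm]
    _ ≤ (14 ^ 7) ^ d := Nat.pow_le_pow_left (by norm_num) d
    _ = 2 ^ (7 * d) * 7 ^ (7 * d) := by rw [← pow_mul, ← mul_pow]; norm_num
    _ ≤ 2 ^ (7 * d) * 7 ^ (8 * e) :=
        Nat.mul_le_mul_left _ (Nat.pow_le_pow_right (by norm_num) (by omega))

theorem two_rpow_div_eight_le_of_two_pow_le {d N : ℕ} (h : 2 ^ d ≤ N ^ 8) :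
    (2 : ℝ) ^ ((d : ℝ) / 8) ≤ N := by
  rw [← pow_le_pow_iff_left₀ (by positivity) N.cast_nonneg (by norm_num : 8 ≠ 0),
    ← Real.rpow_mul_natCast zero_le_two, Nat.cast_ofNat, div_mul_cancel₀ _ (by norm_num)]
  exact_mod_cast h

/-- Gilbert–Varshamov: For `d ≥ 8` there is a subset `Ω'` of the
hypercube `Fin d → Bool` of cardinality at least `2^(d/8)` in which any two distinct
points are at Hamming distance at least `d/8`. -/
theorem gilbert_varshamov (d : ℕ) (hd : 8 ≤ d) :
    ∃ Ω' : Finset (Fin d → Bool),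
      (2 : ℝ) ^ ((d : ℝ) / 8) ≤ (Ω'.card : ℝ) ∧
      ∀ ω ∈ Ω', ∀ ω' ∈ Ω', ω ≠ ω' → (d : ℝ) / 8 ≤ (hammingDist ω ω' : ℝ) := by
  set m := (d + 7) / 8
  obtain ⟨C, hpacking, hcover⟩ :=
    exists_pairwise_hammingDist_ge_and_covering (ι := Fin d) (β := Bool) (m := m) (by omega)
  have hcount := two_pow_card_le_card_mul_sum_choose_of_covering hcover
  rw [Fintype.card_fin] at hcount
  have hcard : 2 ^ d ≤ #C ^ 8 := by
    refine Nat.le_of_mul_le_mul_right ?_ (pow_pos two_pos (7 * d))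
    calc 2 ^ d * 2 ^ (7 * d) = (2 ^ d) ^ 8 := by ring
      _ ≤ (#C * ∑ k ∈ range m, d.choose k) ^ 8 := Nat.pow_le_pow_left hcount 8
      _ ≤ #C ^ 8 * 2 ^ (7 * d) := by
          rw [mul_pow]; exact Nat.mul_le_mul_left _ (sum_range_choose_pow_eight_le d)
  refine ⟨C, two_rpow_div_eight_le_of_two_pow_le hcard, fun ω hω ω' hω' hne => ?_⟩
  have hm : (d : ℝ) / 8 ≤ m := by
    rw [div_le_iff₀ (by norm_num)]
    exact_mod_cast (by omega : d ≤ m * 8)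
  exact hm.trans (by exact_mod_cast hpacking hω hω' hne)
end

section
/- (Multi-source-target reduction to testing.) Let D be a measurable space, N ≥ 1, and let S_1, …, S_N be probability measures on D. Let H be a type (a hypothesis class), let L_1, …, L_N : H → ℝ be excess-loss functionals, and let δ > 0. Assume the target-δ-separation condition: for all j ≠ k and all h ∈ H, if L_j(h) ≤ δ then L_k(h) ≥ δ. Then for every map ĥ : D → H such that d ↦ L_j(ĥ(d)) is measurable for each j, one has max_{j ∈ [N]} S_j({d : L_j(ĥ(d)) ≥ δ}) ≥ inf_{ψ} max_{j ∈ [N]} S_j({d : ψ(d) ≠ j}), where the infimum is over all measurable tests ψ : D → Fin N. -/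
open MeasureTheory

/-!
Separation makes the regions `{d | L j (ĥ d) < δ}` pairwise disjoint, so the test that answers
the unique `j` whose region contains `d` (and an arbitrary index elsewhere) is measurable and can
only err on `j` where `L j (ĥ d) ≥ δ`.
-/

section

open Function

variable {D ι : Type*}

theorem pairwise_disjoint_sublevel_of_separated {H : Type*} {L : ι → H → ℝ} {δ : ℝ}
    (hsep : ∀ j k, j ≠ k → ∀ h : H, L j h ≤ δ → δ ≤ L k h) (hhat : D → H) :
    Pairwise (Disjoint on fun j => {d | L j (hhat d) < δ}) := fun j k hjk =>
  Set.disjoint_left.2 fun _ hj hk =>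
    (hsep j k hjk _ (le_of_lt hj)).not_gt hk

theorem exists_measurable_eq_of_mem_of_pairwise_disjoint [MeasurableSpace D] [MeasurableSpace ι]
    [Countable ι] [Nonempty ι] {A : ι → Set D} (hA : ∀ j, MeasurableSet (A j))
    (hdisj : Pairwise (Disjoint on A)) :
    ∃ ψ : D → ι, Measurable ψ ∧ ∀ j, ∀ d ∈ A j, ψ d = j := by
  classical
  have hunique : ∀ {j k d}, d ∈ A j → d ∈ A k → j = k := fun hj hk =>
    by_contra fun hne => Set.disjoint_left.1 (hdisj hne) hj hk
  let ψ : D → ι := fun d =>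
    if h : ∃ j, d ∈ A j then h.choose else Classical.arbitrary ι
  have hψ : ∀ j, ∀ d ∈ A j, ψ d = j := fun j d hd => by
    have h : ∃ j, d ∈ A j := ⟨j, hd⟩
    simpa only [ψ, dif_pos h] using hunique h.choose_spec hd
  have hpre : ∀ j, ψ ⁻¹' {j} =
      A j ∪ ((⋃ k, A k)ᶜ ∩ {_d | Classical.arbitrary ι = j}) := fun j => by
    ext d
    by_cases h : ∃ k, d ∈ A k
    · obtain ⟨k, hk⟩ := h
      simp only [Set.mem_preimage, Set.mem_singleton_iff, hψ k d hk]
      exact ⟨fun hkj => .inl (hkj ▸ hk),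
        fun h => h.elim (hunique hk) fun h' => (h'.1 (Set.mem_iUnion.2 ⟨k, hk⟩)).elim⟩
    · push Not at h
      simp [ψ, h]
  refine ⟨ψ, measurable_to_countable' fun j => ?_, hψ⟩
  rw [hpre j]
  exact (hA j).union ((MeasurableSet.iUnion hA).compl.inter (MeasurableSet.const _))

end

theorem reduction_to_testing_general
    {D : Type*} [MeasurableSpace D] (N : ℕ) (hN : 1 ≤ N)
    (S : Fin N → Measure D)
    {H : Type*} (L : Fin N → H → ℝ) (δ : ℝ)
    (hsep : ∀ j k, j ≠ k → ∀ h : H, L j h ≤ δ → δ ≤ L k h)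
    (hhat : D → H) (hmeas : ∀ j, Measurable fun d => L j (hhat d)) :
    (⨅ ψ : {ψ : D → Fin N // Measurable ψ}, ⨆ j, S j {d | ψ.1 d ≠ j}) ≤
      ⨆ j, S j {d | δ ≤ L j (hhat d)} := by
  have : Nonempty (Fin N) := ⟨⟨0, hN⟩⟩
  obtain ⟨ψ, hψ, hψ_eq⟩ := exists_measurable_eq_of_mem_of_pairwise_disjoint
    (fun j => measurableSet_lt (hmeas j) measurable_const)
    (pairwise_disjoint_sublevel_of_separated hsep hhat)
  exact iInf_le_of_le ⟨ψ, hψ⟩ <| iSup_mono fun j => measure_mono fun d (hd : ψ d ≠ j) =>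
    show δ ≤ L j (hhat d) from le_of_not_gt fun hlt => hd (hψ_eq j d hlt)

/-- Multi-source-target reduction to testing: if the excess-loss
functionals `L 1, …, L N` are target-`δ`-separated, then for every estimator
`ĥ : D → H` (with measurable composed losses), the maximal probability of incurring
excess loss at least `δ` is at least the minimax testing error. -/
theorem reduction_to_testing
    {D : Type*} [MeasurableSpace D] (N : ℕ) (hN : 1 ≤ N)
    (S : Fin N → Measure D) (hS : ∀ j, IsProbabilityMeasure (S j))
    {H : Type*} (L : Fin N → H → ℝ) (δ : ℝ) (hδ : 0 < δ)
    (hsep : ∀ j k, j ≠ k → ∀ h : H, L j h ≤ δ → δ ≤ L k h)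
    (hhat : D → H) (hmeas : ∀ j, Measurable fun d => L j (hhat d)) :
    (⨅ ψ : {ψ : D → Fin N // Measurable ψ}, ⨆ j, S j {d | ψ.1 d ≠ j}) ≤
      ⨆ j, S j {d | δ ≤ L j (hhat d)} :=
  reduction_to_testing_general N hN S L δ hsep hhat hmeas
end

section
/- (Fano's method for testing.) Let N ≥ 2 and let S_1, …, S_N be probability measures on a measurable space D such that KL(S_j ‖ S_k) < ∞ for all j, k. Then for every measurable test ψ : D → Fin N, max_{j ∈ [N]} S_j({d : ψ(d) ≠ j}) ≥ 1 − ( (1/N²) ∑_{j=1}^N ∑_{k=1}^N KL(S_j ‖ S_k) + log 2 ) / log N. In particular, if N ≥ 4 and KL(S_j ‖ S_k) ≤ (log N)/4 for all j, k, then max_{j} S_j({d : ψ(d) ≠ j}) ≥ 1/4. -/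
/-!
Compare each pair `(S j, S k)` on the partition `{ψ = j}, {ψ ≠ j}`: by data processing,
`KL(S_j ‖ S_k)` dominates the divergence between the two-point laws that this partition induces.
Summing over all `N²` pairs, the log-sum inequality collapses these two-point terms into
`N² kl(ē ‖ 1 - 1/N)`, where `kl` is the Bernoulli divergence and `ē` the average error: the
probabilities `S_k {ψ = j}` sum to `1` over `j`, so in total `N` over the pairs, against `N(N - 1)`
for `{ψ ≠ j}`. Finally `kl(ē ‖ 1 - 1/N) ≥ (1 - ē) log N - log 2` because the binary entropy is at
most `log 2`, and the maximal error is at least `ē`.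
-/

open MeasureTheory ENNReal

open Classical in
/-- The Kullback–Leibler divergence between two measures, valued in `[0, ∞]`:
`∫ log(dμ/dν) dμ` if `μ ≪ ν` and the integrand is `μ`-integrable, and `∞` otherwise. -/
noncomputable def KLdiv {Ω : Type*} [MeasurableSpace Ω] (μ ν : Measure Ω) : ℝ≥0∞ :=
  if μ ≪ ν ∧ Integrable (fun x => Real.log (μ.rnDeriv ν x).toReal) μ
  then ENNReal.ofReal (∫ x, Real.log (μ.rnDeriv ν x).toReal ∂μ)
  else ∞

open InformationTheory

section KullbackLeibler

variable {α : Type*} [MeasurableSpace α] {μ ν : Measure α}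

lemma KLdiv_eq_klDiv [IsProbabilityMeasure μ] [IsProbabilityMeasure ν] :
    KLdiv μ ν = klDiv μ ν := by
  unfold KLdiv
  split_ifs with h
  · simp [klDiv_of_ac_of_integrable h.1 h.2, llr_def]
  · exact (klDiv_eq_top_iff.mpr fun hμν hint => h ⟨hμν, hint⟩).symm

lemma llr_restrict_ae_eq [SigmaFinite μ] [SigmaFinite ν] (hμν : μ ≪ ν) {s : Set α}
    (hs : MeasurableSet s) :
    llr (μ.restrict s) (ν.restrict s) =ᵐ[μ.restrict s] llr μ ν := by
  have hwd : μ.restrict s = (ν.restrict s).withDensity (μ.rnDeriv ν) := by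
    rw [← restrict_withDensity hs, Measure.withDensity_rnDeriv_eq μ ν hμν]
  have h := Measure.rnDeriv_withDensity (ν.restrict s) (Measure.measurable_rnDeriv μ ν)
  rw [← hwd] at h
  filter_upwards [hμν.restrict s h] with x hx
  simp only [llr_def, hx]

lemma mul_log_le_setIntegral_llr [IsFiniteMeasure μ] [IsFiniteMeasure ν] (hμν : μ ≪ ν)
    (hint : Integrable (llr μ ν) μ) {s : Set α} (hs : MeasurableSet s) :
    μ.real s * Real.log (μ.real s / ν.real s) ≤ ∫ x in s, llr μ ν x ∂μ := by
  have hae := llr_restrict_ae_eq hμν hs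
  have hint_s : Integrable (llr (μ.restrict s) (ν.restrict s)) (μ.restrict s) :=
    hint.restrict.congr hae.symm
  have h := mul_log_le_toReal_klDiv (hμν.restrict s) hint_s
  rw [toReal_klDiv (hμν.restrict s) hint_s, integral_congr_ae hae] at h
  simpa only [measureReal_restrict_apply_univ, add_sub_assoc, add_le_add_iff_right] using h

lemma mul_log_add_mul_log_compl_le_toReal_klDiv [IsProbabilityMeasure μ]
    [IsProbabilityMeasure ν] (h : klDiv μ ν ≠ ∞) {s : Set α} (hs : MeasurableSet s) :
    μ.real s * Real.log (μ.real s / ν.real s) + μ.real sᶜ * Real.log (μ.real sᶜ / ν.real sᶜ)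
      ≤ (klDiv μ ν).toReal := by
  obtain ⟨hμν, hint⟩ := klDiv_ne_top_iff.mp h
  rw [toReal_klDiv_of_measure_eq hμν (by simp), ← integral_add_compl hs hint]
  exact add_le_add (mul_log_le_setIntegral_llr hμν hint hs)
    (mul_log_le_setIntegral_llr hμν hint hs.compl)

end KullbackLeibler

lemma mul_log_add_sub_le_mul_log_div {a b c : ℝ} (ha : 0 ≤ a) (hb : 0 ≤ b)
    (hab : b = 0 → a = 0) (hc : 0 < c) : a * Real.log c + a - b * c ≤ a * Real.log (a / b) := by
  rcases ha.eq_or_lt with rfl | ha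
  · simpa using mul_nonneg hb hc.le
  have hb : 0 < b := hb.lt_of_ne fun h => ha.ne' (hab h.symm)
  have h := Real.log_le_sub_one_of_pos (show 0 < b * c / a by positivity)
  rw [Real.log_div (by positivity) ha.ne', Real.log_mul hb.ne' hc.ne'] at h
  rw [Real.log_div ha.ne' hb.ne']
  have : a * (b * c / a) = b * c := by field_simp
  nlinarith

theorem sum_mul_log_div_sum_le {ι : Type*} (s : Finset ι) {a b : ι → ℝ}
    (ha : ∀ i ∈ s, 0 ≤ a i) (hb : ∀ i ∈ s, 0 ≤ b i) (hab : ∀ i ∈ s, b i = 0 → a i = 0) :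
    (∑ i ∈ s, a i) * Real.log ((∑ i ∈ s, a i) / ∑ i ∈ s, b i)
      ≤ ∑ i ∈ s, a i * Real.log (a i / b i) := by
  rcases (Finset.sum_nonneg ha).eq_or_lt with hA | hA
  · rw [← hA, zero_mul]
    refine Finset.sum_nonneg fun i hi => ?_
    simp [(Finset.sum_eq_zero_iff_of_nonneg ha).mp hA.symm i hi]
  have hB : 0 < ∑ i ∈ s, b i := by
    refine (Finset.sum_nonneg hb).lt_of_ne fun hB => hA.ne' (Finset.sum_eq_zero fun i hi => ?_)
    exact hab i hi ((Finset.sum_eq_zero_iff_of_nonneg hb).mp hB.symm i hi)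
  calc (∑ i ∈ s, a i) * Real.log ((∑ i ∈ s, a i) / ∑ i ∈ s, b i)
      = ∑ i ∈ s, (a i * Real.log ((∑ i ∈ s, a i) / ∑ i ∈ s, b i) + a i
          - b i * ((∑ i ∈ s, a i) / ∑ i ∈ s, b i)) := by
        rw [Finset.sum_sub_distrib, Finset.sum_add_distrib, ← Finset.sum_mul, ← Finset.sum_mul]
        field_simp
        ring
    _ ≤ _ := Finset.sum_le_sum fun i hi =>
        mul_log_add_sub_le_mul_log_div (ha i hi) (hb i hi) (hab i hi) (by positivity)

lemma sum_sum_mul_log_div_sum_sum_le {ι κ : Type*} [Fintype ι] [Fintype κ] {a b : ι → κ → ℝ}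
    (ha : ∀ i j, 0 ≤ a i j) (hb : ∀ i j, 0 ≤ b i j) (hab : ∀ i j, b i j = 0 → a i j = 0) :
    (∑ i, ∑ j, a i j) * Real.log ((∑ i, ∑ j, a i j) / ∑ i, ∑ j, b i j)
      ≤ ∑ i, ∑ j, a i j * Real.log (a i j / b i j) := by
  simpa only [Fintype.sum_prod_type] using sum_mul_log_div_sum_le Finset.univ
    (a := fun p : ι × κ => a p.1 p.2) (b := fun p => b p.1 p.2) (fun _ _ => ha _ _)
    (fun _ _ => hb _ _) fun _ _ => hab _ _

/-- The Kullback–Leibler divergence between the Bernoulli laws with parameters `p` and `q`. -/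
noncomputable def binKLDiv (p q : ℝ) : ℝ :=
  p * Real.log (p / q) + (1 - p) * Real.log ((1 - p) / (1 - q))

lemma mul_log_div_eq_sub (x : ℝ) {c : ℝ} (hc : c ≠ 0) :
    x * Real.log (x / c) = x * Real.log x - x * Real.log c := by
  rcases eq_or_ne x 0 with rfl | hx
  · simp
  · rw [Real.log_div hx hc, mul_sub]

lemma binKLDiv_eq_neg_binEntropy_sub {q : ℝ} (hq0 : q ≠ 0) (hq1 : q ≠ 1) (p : ℝ) :
    binKLDiv p q = -Real.binEntropy p - p * Real.log q - (1 - p) * Real.log (1 - q) := by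
  rw [binKLDiv, mul_log_div_eq_sub _ hq0, mul_log_div_eq_sub _ (sub_ne_zero.mpr hq1.symm),
    Real.binEntropy_eq_negMulLog_add_negMulLog_one_sub, Real.negMulLog, Real.negMulLog]
  ring

lemma mul_log_sub_log_two_le_binKLDiv {n e : ℝ} (hn : 1 < n) (he : 0 ≤ e) :
    (1 - e) * Real.log n - Real.log 2 ≤ binKLDiv e (1 - n⁻¹) := by
  have hinv : n⁻¹ < 1 := inv_lt_one_of_one_lt₀ hn
  have hlog : Real.log (1 - n⁻¹) ≤ 0 := Real.log_nonpos (by linarith) (by simp; positivity)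
  rw [binKLDiv_eq_neg_binEntropy_sub (by linarith) (by simp; positivity), _root_.sub_sub_cancel,
    Real.log_inv]
  nlinarith [Real.binEntropy_le_log_two (p := e)]

/-- The form in which the log-sum inequality over `n²` pairs produces `binKLDiv`. -/
lemma sq_mul_binKLDiv_eq {n E : ℝ} (hn : n ≠ 0) :
    n ^ 2 * binKLDiv (E / n) (1 - n⁻¹)
      = n * E * Real.log (n * E / (n * (n - 1))) + n * (n - E) * Real.log (n * (n - E) / n) := by
  have hq : 1 - n⁻¹ = (n - 1) / n := by field_simp
  rw [binKLDiv, _root_.sub_sub_cancel, hq, div_div_div_cancel_right₀ hn, mul_div_mul_left _ _ hn,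
    mul_div_cancel_left₀ _ hn, show (1 - E / n) / n⁻¹ = n - E by field_simp]
  field_simp

section Fano

variable {ι D : Type*} [Fintype ι] [MeasurableSpace ι] [MeasurableSingletonClass ι]
  [MeasurableSpace D] {ψ : D → ι}

lemma sum_measureReal_preimage_singleton_eq_one (μ : Measure D) [IsProbabilityMeasure μ]
    (hψ : Measurable ψ) : ∑ j, μ.real (ψ ⁻¹' {j}) = 1 := by
  rw [sum_measureReal_preimage_singleton _ fun j _ => hψ (measurableSet_singleton j)]
  simp

lemma sum_measureReal_compl_preimage_singleton (μ : Measure D) [IsProbabilityMeasure μ]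
    (hψ : Measurable ψ) : ∑ j, μ.real (ψ ⁻¹' {j})ᶜ = Fintype.card ι - 1 := by
  simp [probReal_compl_eq_one_sub (hψ (measurableSet_singleton _)), Finset.sum_sub_distrib,
    sum_measureReal_preimage_singleton_eq_one μ hψ]

theorem binKLDiv_mean_error_le_mean_klDiv [Nonempty ι] (S : ι → Measure D)
    [∀ j, IsProbabilityMeasure (S j)] (hS : ∀ j k, klDiv (S j) (S k) ≠ ∞) (hψ : Measurable ψ) :
    binKLDiv ((∑ j, (S j).real {d | ψ d ≠ j}) / Fintype.card ι) (1 - (Fintype.card ι : ℝ)⁻¹)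
      ≤ ((Fintype.card ι : ℝ) ^ 2)⁻¹ * ∑ j, ∑ k, (klDiv (S j) (S k)).toReal := by
  set n : ℝ := (Fintype.card ι : ℝ)
  have hn : 0 < n := by positivity
  set A : ι → Set D := fun j => ψ ⁻¹' {j}
  have hA : ∀ j, MeasurableSet (A j) := fun j => hψ (measurableSet_singleton j)
  set E := ∑ j, (S j).real (A j)ᶜ
  have hac : ∀ j k (s : Set D), (S k).real s = 0 → (S j).real s = 0 := fun j k s h => by
    rw [measureReal_eq_zero_iff] at h ⊢
    exact (klDiv_ne_top_iff.mp (hS j k)).1 h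
  have hdp : ∑ j, ∑ k, ((S j).real (A j) * Real.log ((S j).real (A j) / (S k).real (A j))
      + (S j).real (A j)ᶜ * Real.log ((S j).real (A j)ᶜ / (S k).real (A j)ᶜ))
      ≤ ∑ j, ∑ k, (klDiv (S j) (S k)).toReal :=
    Finset.sum_le_sum fun j _ => Finset.sum_le_sum fun k _ =>
      mul_log_add_mul_log_compl_le_toReal_klDiv (hS j k) (hA j)
  simp only [Finset.sum_add_distrib] at hdp
  have hls := sum_sum_mul_log_div_sum_sum_le (a := fun j (_ : ι) => (S j).real (A j))
    (b := fun j k => (S k).real (A j)) (fun _ _ => measureReal_nonneg)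
    (fun _ _ => measureReal_nonneg) fun _ _ => hac _ _ _
  have hlsc := sum_sum_mul_log_div_sum_sum_le (a := fun j (_ : ι) => (S j).real (A j)ᶜ)
    (b := fun j k => (S k).real (A j)ᶜ) (fun _ _ => measureReal_nonneg)
    (fun _ _ => measureReal_nonneg) fun _ _ => hac _ _ _
  have hsumA : ∑ j : ι, ∑ _k : ι, (S j).real (A j) = n * (n - E) := by
    simp [Finset.mul_sum, E, n, probReal_compl_eq_one_sub (hA _), Finset.sum_sub_distrib]
  have hsumAc : ∑ j : ι, ∑ _k : ι, (S j).real (A j)ᶜ = n * E := by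
    simp [Finset.mul_sum, E, n]
  have hsumB : ∑ j, ∑ k, (S k).real (A j) = n := by
    simp [Finset.sum_comm (γ := ι), sum_measureReal_preimage_singleton_eq_one _ hψ, A, n]
  have hsumBc : ∑ j, ∑ k, (S k).real (A j)ᶜ = n * (n - 1) := by
    simp [Finset.sum_comm (γ := ι), sum_measureReal_compl_preimage_singleton _ hψ, A, n]
    ring
  rw [hsumA, hsumB] at hls
  rw [hsumAc, hsumBc] at hlsc
  show binKLDiv (E / n) (1 - n⁻¹) ≤ _
  rw [inv_mul_eq_div, le_div_iff₀' (by positivity), sq_mul_binKLDiv_eq hn.ne']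
  linarith

end Fano

lemma sum_div_card_le_ciSup {ι : Type*} [Fintype ι] [Nonempty ι] (f : ι → ℝ) :
    (∑ i, f i) / Fintype.card ι ≤ ⨆ i, f i := by
  rw [div_le_iff₀ (by positivity), mul_comm, ← nsmul_eq_mul, ← Finset.card_univ]
  exact Finset.sum_le_card_nsmul _ _ _ fun i _ => le_ciSup (Finite.bddAbove_range f) i

lemma quarter_le_one_sub_div_log {N K : ℝ} (hN : 4 ≤ N) (hK : K ≤ Real.log N / 4) :
    1 / 4 ≤ 1 - (K + Real.log 2) / Real.log N := by
  have hlog4 : 2 * Real.log 2 ≤ Real.log N := by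
    rw [← Real.log_rpow two_pos]
    exact Real.log_le_log (by norm_num) (by norm_num; linarith)
  have hlogN : 0 < Real.log N := Real.log_pos (by linarith)
  have : (K + Real.log 2) / Real.log N ≤ 3 / 4 := by
    rw [div_le_iff₀ hlogN]
    linarith
  linarith

/-- Fano's method for testing: for probability measures `S 1, …, S N`
(`N ≥ 2`) with pairwise finite KL divergences and any measurable test `ψ`,
`max_j S_j(ψ ≠ j) ≥ 1 − ((1/N²) ∑_{j,k} KL(S_j‖S_k) + log 2)/log N`; in particular, if
`N ≥ 4` and all `KL(S_j‖S_k) ≤ (log N)/4`, then `max_j S_j(ψ ≠ j) ≥ 1/4`. -/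
theorem fano_method
    {D : Type*} [MeasurableSpace D] (N : ℕ) (hN : 2 ≤ N)
    (S : Fin N → Measure D) (hS : ∀ j, IsProbabilityMeasure (S j))
    (hKLfin : ∀ j k, KLdiv (S j) (S k) < ∞)
    (ψ : D → Fin N) (hψ : Measurable ψ) :
    (1 - (((N : ℝ) ^ 2)⁻¹ * ∑ j, ∑ k, (KLdiv (S j) (S k)).toReal + Real.log 2) /
        Real.log N ≤ ⨆ j, (S j {d | ψ d ≠ j}).toReal) ∧
    (4 ≤ N → (∀ j k, (KLdiv (S j) (S k)).toReal ≤ Real.log N / 4) →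
      (1 : ℝ) / 4 ≤ ⨆ j, (S j {d | ψ d ≠ j}).toReal) := by
  have : Nonempty (Fin N) := ⟨⟨0, by omega⟩⟩
  have hN1 : (1 : ℝ) < N := by exact_mod_cast hN
  have hKL : ∀ j k, KLdiv (S j) (S k) = klDiv (S j) (S k) := fun j k => KLdiv_eq_klDiv
  simp only [hKL] at hKLfin ⊢
  set K := ((N : ℝ) ^ 2)⁻¹ * ∑ j, ∑ k, (klDiv (S j) (S k)).toReal
  set e := (∑ j, (S j).real {d | ψ d ≠ j}) / N
  have hfano : (1 - e) * Real.log N - Real.log 2 ≤ K := by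
    have := binKLDiv_mean_error_le_mean_klDiv S (fun j k => (hKLfin j k).ne) hψ
    rw [Fintype.card_fin] at this
    exact (mul_log_sub_log_two_le_binKLDiv hN1 (by positivity)).trans this
  have hmain : 1 - (K + Real.log 2) / Real.log N ≤ ⨆ j, (S j {d | ψ d ≠ j}).toReal := by
    have hmean := sum_div_card_le_ciSup fun j => (S j).real {d | ψ d ≠ j}
    rw [Fintype.card_fin] at hmean
    calc 1 - (K + Real.log 2) / Real.log N ≤ e := by
          rw [sub_le_comm, le_div_iff₀ (Real.log_pos hN1)]
          linarith
      _ ≤ _ := hmean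
  refine ⟨hmain, fun hN4 hsmall =>
    (quarter_le_one_sub_div_log (by exact_mod_cast hN4) ?_).trans hmain⟩
  calc K ≤ ((N : ℝ) ^ 2)⁻¹ * ∑ _j : Fin N, ∑ _k : Fin N, Real.log N / 4 := by
        unfold K
        gcongr with j _ k _
        exact hsmall j k
    _ = Real.log N / 4 := by
        simp only [Finset.sum_const, Finset.card_univ, Fintype.card_fin, nsmul_eq_mul]
        field_simp
end

section
/- Let p ∈ (0, 1]. For each n ≥ 1 let e_n := ∑_{k=1}^{n} (1/k)·C(n,k)·p^k·(1−p)^{n−k} be the expectation of 1{X > 0}/X when X is Binomial(n, p). Then n·e_n → 1/p as n → ∞. -/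
/-!
With `w n k = C(n,k) pᵏ (1-p)ⁿ⁻ᵏ`, the identity `(n+1) p · w n k / (k+1) = w (n+1) (k+1)` turns
`E[1/(X+1)]` into exactly `(1 - (1-p)ⁿ⁺¹) / ((n+1) p)`, and, applied twice, bounds
`E[1/((X+1)(X+2))]` by `1 / ((n+1)(n+2) p²)`. Since `1/(X+1) ≤ 1/X ≤ 1/(X+1) + 3/((X+1)(X+2))`
for `X ≥ 1`, `n e_n` is squeezed between `n E[1/(X+1)] - n (1-p)ⁿ` and
`n E[1/(X+1)] + 3 n E[1/((X+1)(X+2))]`, and both tend to `1/p`.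
-/

open Filter Finset Topology

def binomialWeight {R : Type*} [CommRing R] (p : R) (n k : ℕ) : R :=
  n.choose k * p ^ k * (1 - p) ^ (n - k)

section CommRing

variable {R : Type*} [CommRing R]

theorem binomialWeight_zero_right (p : R) (n : ℕ) : binomialWeight p n 0 = (1 - p) ^ n := by
  simp [binomialWeight]

theorem sum_range_binomialWeight (p : R) (n : ℕ) :
    ∑ k ∈ range (n + 1), binomialWeight p n k = 1 := by
  have h := add_pow p (1 - p) n
  rw [add_sub_cancel, one_pow] at h
  rw [h]
  exact sum_congr rfl fun k _ => by unfold binomialWeight; ring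

end CommRing

section Field

variable {K : Type*} [Field K] [CharZero K]

theorem add_one_mul_mul_binomialWeight_div (p : K) (n k : ℕ) :
    (n + 1) * p * (binomialWeight p n k / (k + 1)) = binomialWeight p (n + 1) (k + 1) := by
  have h : ((n : K) + 1) * n.choose k = (n + 1).choose (k + 1) * (k + 1) := by
    exact_mod_cast Nat.add_one_mul_choose_eq n k
  unfold binomialWeight
  rw [Nat.add_sub_add_right]
  field_simp
  linear_combination p ^ (k + 1) * (1 - p) ^ (n - k) * h

theorem add_one_mul_add_two_mul_sq_mul_binomialWeight_div (p : K) (n k : ℕ) :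
    (n + 1) * (n + 2) * p ^ 2 * (binomialWeight p n k / ((k + 1) * (k + 2))) =
      binomialWeight p (n + 2) (k + 2) := by
  have h₁ := add_one_mul_mul_binomialWeight_div p n k
  have h₂ := add_one_mul_mul_binomialWeight_div p (n + 1) (k + 1)
  push_cast at h₂
  rw [← h₂, ← h₁]
  field_simp
  ring

theorem add_one_mul_mul_sum_binomialWeight_div (p : K) (n : ℕ) :
    (n + 1) * p * ∑ k ∈ range (n + 1), binomialWeight p n k / (k + 1) = 1 - (1 - p) ^ (n + 1) := by
  have h := sum_range_binomialWeight p (n + 1)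
  rw [sum_range_succ', binomialWeight_zero_right] at h
  rw [mul_sum]
  simp_rw [add_one_mul_mul_binomialWeight_div]
  linear_combination h

end Field

section LinearOrderedField

variable {K : Type*} [Field K] [LinearOrder K] [IsStrictOrderedRing K]

theorem binomialWeight_nonneg {p : K} (hp₀ : 0 ≤ p) (hp₁ : p ≤ 1) (n k : ℕ) :
    0 ≤ binomialWeight p n k := by
  have : 0 ≤ 1 - p := sub_nonneg.mpr hp₁
  unfold binomialWeight
  positivity

theorem add_one_mul_add_two_mul_sq_mul_sum_binomialWeight_div_le {p : K} (hp₀ : 0 ≤ p)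
    (hp₁ : p ≤ 1) (n : ℕ) :
    (n + 1) * (n + 2) * p ^ 2 * ∑ k ∈ range (n + 1), binomialWeight p n k / ((k + 1) * (k + 2))
      ≤ 1 := by
  have h := sum_range_binomialWeight p (n + 2)
  rw [sum_range_succ', sum_range_succ'] at h
  rw [mul_sum]
  simp_rw [add_one_mul_add_two_mul_sq_mul_binomialWeight_div]
  linarith [binomialWeight_nonneg hp₀ hp₁ (n + 2) 0, binomialWeight_nonneg hp₀ hp₁ (n + 2) 1]

theorem one_div_sub_one_div_add_one_le {x : K} (hx : 1 ≤ x) :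
    1 / x - 1 / (x + 1) ≤ 3 / ((x + 1) * (x + 2)) := by
  have hx₀ : 0 < x := by linarith
  rw [div_sub_div _ _ hx₀.ne' (by positivity), div_le_div_iff₀ (by positivity) (by positivity)]
  nlinarith

theorem sum_range_binomialWeight_div_le {p : K} (hp₀ : 0 ≤ p) (hp₁ : p ≤ 1) (n : ℕ) :
    ∑ k ∈ range (n + 1), binomialWeight p n k / (k + 1) ≤
      (1 - p) ^ n + ∑ k ∈ Icc 1 n, binomialWeight p n k / k := by
  rw [Nat.range_succ_eq_Icc_zero, ← insert_Icc_add_one_left_eq_Icc n.zero_le,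
    sum_insert (by simp), zero_add, binomialWeight_zero_right]
  push_cast
  rw [zero_add, div_one]
  gcongr with k hk
  · exact binomialWeight_nonneg hp₀ hp₁ n k
  · have : (1 : K) ≤ k := by exact_mod_cast (mem_Icc.mp hk).1
    linarith
  · linarith

theorem sum_Icc_binomialWeight_div_le {p : K} (hp₀ : 0 ≤ p) (hp₁ : p ≤ 1) (n : ℕ) :
    ∑ k ∈ Icc 1 n, binomialWeight p n k / k ≤
      ∑ k ∈ range (n + 1), binomialWeight p n k / (k + 1) +
        3 * ∑ k ∈ range (n + 1), binomialWeight p n k / ((k + 1) * (k + 2)) := by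
  have hw := binomialWeight_nonneg hp₀ hp₁ n
  rw [mul_sum, ← sum_add_distrib]
  calc ∑ k ∈ Icc 1 n, binomialWeight p n k / k
      ≤ ∑ k ∈ Icc 1 n, (binomialWeight p n k / (k + 1) +
          3 * (binomialWeight p n k / ((k + 1) * (k + 2)))) := by
        refine sum_le_sum fun k hk => ?_
        have hk : (1 : K) ≤ k := by exact_mod_cast (mem_Icc.mp hk).1
        have := mul_le_mul_of_nonneg_left (one_div_sub_one_div_add_one_le hk) (hw k)
        field_simp at this ⊢
        linarith
    _ ≤ _ := by
        refine sum_le_sum_of_subset_of_nonneg (fun k hk => ?_) fun k _ _ => by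
          have := hw k
          positivity
        simp only [mem_range, mem_Icc] at hk ⊢
        omega

end LinearOrderedField

theorem tendsto_natCast_mul_sum_binomialWeight_div {p : ℝ} (hp₀ : 0 < p) (hp₁ : p ≤ 1) :
    Tendsto (fun n : ℕ => n * ∑ k ∈ range (n + 1), binomialWeight p n k / (k + 1)) atTop
      (𝓝 (1 / p)) := by
  have h : ∀ n : ℕ, n * ∑ k ∈ range (n + 1), binomialWeight p n k / (k + 1) =
      n / (n + 1) * (1 - (1 - p) ^ (n + 1)) / p := fun n => by
    rw [← add_one_mul_mul_sum_binomialWeight_div]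
    field_simp
  have hq : Tendsto (fun n : ℕ => (1 - p) ^ (n + 1)) atTop (𝓝 0) :=
    (tendsto_pow_atTop_nhds_zero_of_lt_one (by linarith) (by linarith)).comp
      (tendsto_add_atTop_nat 1)
  simp_rw [h]
  simpa using ((tendsto_natCast_div_add_atTop (1 : ℝ)).mul (hq.const_sub 1)).div_const p

theorem tendsto_natCast_mul_sum_binomialWeight_div_mul {p : ℝ} (hp₀ : 0 < p) (hp₁ : p ≤ 1) :
    Tendsto (fun n : ℕ => n * ∑ k ∈ range (n + 1), binomialWeight p n k / ((k + 1) * (k + 2)))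
      atTop (𝓝 0) := by
  have hb (n : ℕ) : 0 ≤ ∑ k ∈ range (n + 1), binomialWeight p n k / ((k + 1) * (k + 2)) :=
    sum_nonneg fun k _ => by
      have := binomialWeight_nonneg hp₀.le hp₁ n k
      positivity
  refine squeeze_zero (fun n => mul_nonneg n.cast_nonneg (hb n)) (fun n => ?_)
    ((tendsto_one_div_add_atTop_nhds_zero_nat.div_const (p ^ 2)).trans_eq (by rw [zero_div]))
  have h := add_one_mul_add_two_mul_sq_mul_sum_binomialWeight_div_le hp₀.le hp₁ n
  rw [div_div, le_div_iff₀ (by positivity)]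
  nlinarith [mul_nonneg (mul_nonneg (hb n) (sq_nonneg p)) (n.cast_add_one_pos (α := ℝ)).le]

/-- If `X ~ Binomial(n, p)` with `p ∈ (0, 1]` and
`e_n = E[1{X > 0}/X] = ∑_{k=1}^n (1/k)·C(n,k)·p^k·(1−p)^{n−k}`, then
`n·e_n → 1/p` as `n → ∞`. -/
theorem binomial_inverse_moment_limit (p : ℝ) (hp0 : 0 < p) (hp1 : p ≤ 1) :
    Filter.Tendsto
      (fun n : ℕ => (n : ℝ) *
        ∑ k ∈ Finset.Icc 1 n,
          (1 / (k : ℝ)) * (n.choose k : ℝ) * p ^ k * (1 - p) ^ (n - k))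
      Filter.atTop (nhds (1 / p)) := by
  have hform : ∀ n : ℕ, ∑ k ∈ Icc 1 n, (1 / (k : ℝ)) * (n.choose k : ℝ) * p ^ k * (1 - p) ^ (n - k)
      = ∑ k ∈ Icc 1 n, binomialWeight p n k / k := fun n =>
    sum_congr rfl fun k _ => by unfold binomialWeight; ring
  simp_rw [hform]
  have hlower := (tendsto_natCast_mul_sum_binomialWeight_div hp0 hp1).sub
    (tendsto_self_mul_const_pow_of_lt_one (sub_nonneg.mpr hp1) (by linarith))
  have hupper := (tendsto_natCast_mul_sum_binomialWeight_div hp0 hp1).add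
    ((tendsto_natCast_mul_sum_binomialWeight_div_mul hp0 hp1).const_mul 3)
  rw [sub_zero] at hlower
  rw [mul_zero, add_zero] at hupper
  refine tendsto_of_tendsto_of_tendsto_of_le_of_le hlower hupper (fun n => ?_) fun n => ?_
  · have := sum_range_binomialWeight_div_le hp0.le hp1 n
    dsimp only
    nlinarith [n.cast_nonneg (α := ℝ)]
  · have := sum_Icc_binomialWeight_div_le hp0.le hp1 n
    dsimp only
    nlinarith [n.cast_nonneg (α := ℝ)]
end

section
/- (Impossibility without bounded means.) Consider the multi-source sampling model with σ > 0, and suppose there exists z* ∈ Fin K with q_T(z*) > 0 and q_m(z*) < 1 for every source m with n_m > 0. Then for every measurable estimator θ̂ : (Fin N → Fin K × ℝ) → ℝ and every constant C > 0, there exists a Markov kernel κ from Fin K to ℝ satisfying ∫ (y − μ_z)² d(κ z) ≤ σ² for every z (one may take each κ z to be a Gaussian with variance σ²), such that the risk E_D[(θ̂(D) − ∑_z q_T(z) μ_z)²] ≥ C. In other words, the supremum of the risk over all variance-bounded Markov kernels is infinite for every sampling plan and estimator. -/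
open MeasureTheory ProbabilityTheory

/-! Use the degenerate kernel `κ z = δ (f z)` with `f` vanishing off `z*`. Every sampled source
gives positive mass to some group `z₀ i ≠ z*`, so with probability at least
`p = ∏ i, q_{src i} (z₀ i) > 0` the dataset equals `D₀ = ((z₀ i, 0))ᵢ`, which does not depend
on `f z*`. The target mean `q_T z* * f z*` can therefore be placed at distance `√(C / p)` from
`θ̂ D₀`, and the risk is at least `p * (C / p) = C`; degenerate kernels have variance `0 ≤ σ²`. -/

/-- The discrete measure on `Fin K` associated with a probability vector `w`. -/
noncomputable def discMeasure {K : ℕ} (w : Fin K → ℝ) : Measure (Fin K) :=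
  ∑ z : Fin K, ENNReal.ofReal (w z) • Measure.dirac z

/-- The joint law of the dataset in the multi-source sampling model: observation `i`
is drawn independently, with group `Z ~ q_{src i}` and response `Y | Z = z ~ κ z`. -/
noncomputable def jointLaw {K M N : ℕ} (qsrc : Fin M → Fin K → ℝ)
    (κ : Kernel (Fin K) ℝ) (src : Fin N → Fin M) :
    Measure (Fin N → Fin K × ℝ) :=
  Measure.pi fun i =>
    (discMeasure (qsrc (src i))).bind fun z => (κ z).map fun y => (z, y)

instance isFiniteMeasure_discMeasure {K : ℕ} (w : Fin K → ℝ) :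
    IsFiniteMeasure (discMeasure w) :=
  ⟨by simp [discMeasure, ENNReal.sum_lt_top]⟩

lemma discMeasure_singleton {K : ℕ} (w : Fin K → ℝ) (z : Fin K) :
    discMeasure w {z} = ENNReal.ofReal (w z) := by
  simp [discMeasure, Set.indicator, Finset.sum_ite_eq']

lemma measureReal_pi_discMeasure_singleton {ι : Type*} [Fintype ι] {K : ℕ}
    (w : ι → Fin K → ℝ) (hw : ∀ i z, 0 ≤ w i z) (zs : ι → Fin K) :
    (Measure.pi fun i => discMeasure (w i)).real {zs} = ∏ i, w i (zs i) := by
  rw [measureReal_def, ← Set.univ_pi_singleton, Measure.pi_pi, ENNReal.toReal_prod]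
  simp_rw [discMeasure_singleton, ENNReal.toReal_ofReal (hw _ _)]

lemma jointLaw_deterministic {K M N : ℕ} (qsrc : Fin M → Fin K → ℝ) (f : Fin K → ℝ)
    (hf : Measurable f) (src : Fin N → Fin M) :
    jointLaw qsrc (Kernel.deterministic f hf) src =
      (Measure.pi fun i => discMeasure (qsrc (src i))).map fun zs i => (zs i, f (zs i)) := by
  rw [Measure.pi_map_pi (f := fun _ z => (z, f z))
    fun _ => (measurable_of_countable _).aemeasurable]
  unfold jointLaw
  congr 1
  funext i
  simp_rw [Kernel.deterministic_apply, Measure.map_dirac' measurable_prodMk_left]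
  exact Measure.bind_dirac_eq_map _ (measurable_of_countable _)

lemma measureReal_singleton_mul_le_integral {X : Type*} [Fintype X] [MeasurableSpace X]
    [MeasurableSingletonClass X] (P : Measure X) [IsFiniteMeasure P] {h : X → ℝ}
    (hh : 0 ≤ h) (x : X) : P.real {x} * h x ≤ ∫ y, h y ∂P := by
  rw [integral_fintype Integrable.of_finite]
  exact Finset.single_le_sum (f := fun y => P.real {y} • h y)
    (fun y _ => smul_nonneg measureReal_nonneg (hh y)) (Finset.mem_univ x)

lemma prod_mul_le_integral_jointLaw_deterministic {K M N : ℕ} (qsrc : Fin M → Fin K → ℝ)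
    (hqsrc : ∀ m z, 0 ≤ qsrc m z) (f : Fin K → ℝ) (hf : Measurable f) (src : Fin N → Fin M)
    {L : (Fin N → Fin K × ℝ) → ℝ} (hL : Measurable L) (hL₀ : 0 ≤ L) (zs : Fin N → Fin K) :
    (∏ i, qsrc (src i) (zs i)) * L (fun i => (zs i, f (zs i))) ≤
      ∫ D, L D ∂(jointLaw qsrc (Kernel.deterministic f hf) src) := by
  rw [jointLaw_deterministic, integral_map (measurable_of_countable _).aemeasurable
    hL.aestronglyMeasurable, ← measureReal_pi_discMeasure_singleton _ (fun i => hqsrc (src i))]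
  exact measureReal_singleton_mul_le_integral (h := fun zs => L fun i => (zs i, f (zs i)))
    (Measure.pi fun i => discMeasure (qsrc (src i))) (fun _ => hL₀ _) zs

lemma exists_ne_pos_of_sum_eq_one {ι : Type*} [Fintype ι] [DecidableEq ι] {w : ι → ℝ}
    (hw : ∑ j, w j = 1) {i : ι} (hi : w i < 1) : ∃ j ≠ i, 0 < w j := by
  by_contra! h
  have : ∑ j ∈ Finset.univ.erase i, w j ≤ 0 :=
    Finset.sum_nonpos fun j hj => h j (Finset.ne_of_mem_erase hj)
  rw [← Finset.add_sum_erase _ _ (Finset.mem_univ i)] at hw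
  linarith

theorem impossibility_without_bounded_means_general
    {K M N : ℕ} (σ : ℝ)
    (qsrc : Fin M → Fin K → ℝ)
    (hqsrc : ∀ m, (∀ z, 0 ≤ qsrc m z) ∧ ∑ z, qsrc m z = 1)
    (qT : Fin K → ℝ)
    (n : Fin M → ℕ)
    (src : Fin N → Fin M)
    (hsrc : ∀ m, (Finset.univ.filter fun i => src i = m).card = n m)
    (zstar : Fin K) (hzT : 0 < qT zstar)
    (hzS : ∀ m, 0 < n m → qsrc m zstar < 1)
    (θ : (Fin N → Fin K × ℝ) → ℝ) (hθ : Measurable θ)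
    (C : ℝ) (hC : 0 < C) :
    ∃ κ : Kernel (Fin K) ℝ, IsMarkovKernel κ ∧
      (∀ z, ∫ y, (y - ∫ y', y' ∂(κ z)) ^ 2 ∂(κ z) ≤ σ ^ 2) ∧
      C ≤ ∫ D, (θ D - ∑ z, qT z * ∫ y, y ∂(κ z)) ^ 2 ∂(jointLaw qsrc κ src) := by
  have hsampled (i : Fin N) : ∃ z ≠ zstar, 0 < qsrc (src i) z :=
    exists_ne_pos_of_sum_eq_one (hqsrc _).2
      (hzS _ (hsrc (src i) ▸ Finset.card_pos.mpr ⟨i, by simp⟩))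
  choose z₀ hz₀ hq₀ using hsampled
  set p := ∏ i, qsrc (src i) (z₀ i)
  have hp : 0 < p := Finset.prod_pos fun i _ => hq₀ i
  set D₀ : Fin N → Fin K × ℝ := fun i => (z₀ i, 0)
  set t := θ D₀ - √(C / p)
  set f : Fin K → ℝ := Pi.single zstar (t / qT zstar)
  have hf : Measurable f := measurable_of_countable f
  refine ⟨Kernel.deterministic f hf, inferInstance, fun z => by simp [sq_nonneg], ?_⟩
  have hmean : ∑ z, qT z * ∫ y, y ∂(Kernel.deterministic f hf z) = t := by
    simp [f, Pi.single_apply, mul_div_cancel₀ _ hzT.ne']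
  have hD₀ : (fun i => (z₀ i, f (z₀ i))) = D₀ := by
    funext i; simp [f, D₀, Pi.single_eq_of_ne (hz₀ i)]
  rw [hmean]
  calc C = p * (θ D₀ - t) ^ 2 := by
        rw [sub_sub_cancel, Real.sq_sqrt (div_nonneg hC.le hp.le)]; field_simp
    _ ≤ _ := hD₀ ▸ prod_mul_le_integral_jointLaw_deterministic qsrc (fun m => (hqsrc m).1)
        f hf src ((hθ.sub measurable_const).pow_const 2) (fun _ => sq_nonneg _) z₀

/-- Impossibility without bounded means: if some group `z*` has positive
target probability but probability `< 1` in every source actually sampled, then for any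
measurable estimator and any `C > 0` there is a Markov kernel with conditional variances
bounded by `σ²` under which the risk for the population mean is at least `C`. -/
theorem impossibility_without_bounded_means
    {K M N : ℕ} (hK : 1 ≤ K) (hM : 1 ≤ M) (σ : ℝ) (hσ : 0 < σ)
    (qsrc : Fin M → Fin K → ℝ)
    (hqsrc : ∀ m, (∀ z, 0 ≤ qsrc m z) ∧ ∑ z, qsrc m z = 1)
    (qT : Fin K → ℝ) (hqT : (∀ z, 0 ≤ qT z) ∧ ∑ z, qT z = 1)
    (n : Fin M → ℕ) (hN : N = ∑ m, n m)
    (src : Fin N → Fin M)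
    (hsrc : ∀ m, (Finset.univ.filter fun i => src i = m).card = n m)
    (zstar : Fin K) (hzT : 0 < qT zstar)
    (hzS : ∀ m, 0 < n m → qsrc m zstar < 1)
    (θ : (Fin N → Fin K × ℝ) → ℝ) (hθ : Measurable θ)
    (C : ℝ) (hC : 0 < C) :
    ∃ κ : Kernel (Fin K) ℝ, IsMarkovKernel κ ∧
      (∀ z, ∫ y, (y - ∫ y', y' ∂(κ z)) ^ 2 ∂(κ z) ≤ σ ^ 2) ∧
      C ≤ ∫ D, (θ D - ∑ z, qT z * ∫ y, y ∂(κ z)) ^ 2 ∂(jointLaw qsrc κ src) :=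
  impossibility_without_bounded_means_general σ qsrc hqsrc qT n src hsrc zstar hzT hzS θ hθ C hC
end

section
/- (Risk bound for the post-stratified estimator of the population mean.) Consider the multi-source sampling model with a Markov kernel κ satisfying |μ_z| ≤ R and ∫ (y − μ_z)² d(κ z) ≤ σ² for every z ∈ Fin K, and a sampling plan n with total size N = ∑_m n_m ≥ 1. The post-stratified estimator θ̂_PS(D) = ∑_z q_T(z)·Ȳ_z satisfies E_D[(θ̂_PS(D) − ∑_z q_T(z) μ_z)²] ≤ ∑_z q_T(z)²·( σ²·E[1{n_z > 0}/n_z] + R²·P(n_z = 0) ) + ∑_{z ≠ z'} q_T(z) q_T(z')·R²·P(n_z = 0 and n_{z'} = 0). -/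
open MeasureTheory ProbabilityTheory

/-- The observed number of data points from group `z`. -/
def nObs {K N : ℕ} (z : Fin K) (D : Fin N → Fin K × ℝ) : ℕ :=
  (Finset.univ.filter fun i => (D i).1 = z).card

/-- The observed group-conditional mean (`0` if group `z` was not observed). -/
noncomputable def groupMean {K N : ℕ} (z : Fin K) (D : Fin N → Fin K × ℝ) : ℝ :=
  if nObs z D = 0 then 0
  else (∑ i ∈ Finset.univ.filter fun i => (D i).1 = z, (D i).2) / (nObs z D : ℝ)

/-!
Condition on the vector `ζ` of group labels and let `n z` be the number of observations in
group `z`. Given `ζ`, the responses are independent with laws `κ (ζ i)` and the error of the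
estimator is affine in them: an observed group `z` contributes `qT z` times the average of `n z`
independent centred responses, an unobserved one the constant `-qT z μ_z`. So the conditional
risk is `∑_z qT z² Var(κ z) / n z + (∑_{n z = 0} qT z μ_z)²`, and bounding the bias by
`∑_{n z = 0} qT z R` and expanding its square gives the right-hand side with the probabilities
replaced by indicators of the events at `ζ`. The law of the dataset is the mixture over `ζ` of
these conditional laws, so averaging over `ζ` gives the theorem.
-/

open scoped ENNReal
open Finset

section ProductMeasure

variable {ι : Type*} [Fintype ι] {Ω : ι → Type*} {mΩ : ∀ i, MeasurableSpace (Ω i)}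
  {μ : (i : ι) → Measure (Ω i)} [∀ i, IsProbabilityMeasure (μ i)] {X : Π i, Ω i → ℝ}

lemma memLp_sum_pi_add_const (hX : ∀ i, MemLp (X i) 2 (μ i)) (b : ℝ) :
    MemLp (fun ω => ∑ i, X i (ω i) + b) 2 (Measure.pi μ) :=
  (memLp_finsetSum _ fun i _ =>
    (hX i).comp_measurePreserving (measurePreserving_eval _ i)).add (memLp_const b)

lemma integral_sq_sum_pi_add_const (hX : ∀ i, MemLp (X i) 2 (μ i))
    (hX0 : ∀ i, ∫ x, X i x ∂μ i = 0) (b : ℝ) :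
    ∫ ω, (∑ i, X i (ω i) + b) ^ 2 ∂Measure.pi μ = ∑ i, Var[X i; μ i] + b ^ 2 := by
  set S : (Π i, Ω i) → ℝ := fun ω => ∑ i, X i (ω i)
  have hS_eq : S = ∑ i, fun ω => X i (ω i) := by ext; simp [S]
  have hS : MemLp S 2 (Measure.pi μ) := by simpa using memLp_sum_pi_add_const hX 0
  have hmean : ∫ ω, (S ω + b) ∂Measure.pi μ = b := by
    rw [integral_add (hS.integrable one_le_two) (integrable_const b)]
    simp only [S]
    rw [integral_finsetSum (f := fun i (ω : Π i, Ω i) => X i (ω i)) _ fun i _ =>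
      ((hX i).comp_measurePreserving (measurePreserving_eval _ i)).integrable one_le_two]
    simp [integral_comp_eval (hX _).aestronglyMeasurable, hX0]
  calc ∫ ω, (S ω + b) ^ 2 ∂Measure.pi μ = Var[S + fun _ => b; Measure.pi μ] + b ^ 2 := by
        rw [variance_eq_sub (hS.add (memLp_const b))]
        simp only [Pi.add_apply, Pi.pow_apply, hmean]
        ring
    _ = ∑ i, Var[X i; μ i] + b ^ 2 := by
        rw [← variance_sum_pi hX, ← hS_eq, ← variance_add_const hS.aestronglyMeasurable b]
        rfl

end ProductMeasure

lemma MeasureTheory.Measure.pi_sum_smul {ι Z : Type*} [Fintype ι] [DecidableEq ι] [Fintype Z]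
    {α : ι → Type*} [∀ i, MeasurableSpace (α i)] (c : ι → Z → ℝ≥0∞) (hc : ∀ i z, c i z ≠ ∞)
    (ρ : (i : ι) → Z → Measure (α i)) [∀ i z, IsFiniteMeasure (ρ i z)] :
    Measure.pi (fun i => ∑ z, c i z • ρ i z)
      = ∑ ζ : ι → Z, (∏ i, c i (ζ i)) • Measure.pi (fun i => ρ i (ζ i)) := by
  have (i : ι) (z : Z) := (ρ i z).smul_finite (hc i z)
  refine Measure.pi_eq fun s hs => ?_
  simp only [Measure.finsetSum_apply, Measure.smul_apply, smul_eq_mul, Measure.pi_pi,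
    ← Finset.prod_mul_distrib]
  exact (Fintype.prod_sum fun i z => c i z * ρ i z (s i)).symm

lemma integral_sum_smul_mono {α ι : Type*} [MeasurableSpace α] [Fintype ι]
    {c : ι → ℝ≥0∞} (hc : ∀ i, c i ≠ ∞) {ν : ι → Measure α} {f g : α → ℝ}
    (hf : ∀ i, Integrable f (ν i)) (hg : ∀ i, Integrable g (ν i))
    (hfg : ∀ i, ∫ x, f x ∂ν i ≤ ∫ x, g x ∂ν i) :
    ∫ x, f x ∂(∑ i, c i • ν i) ≤ ∫ x, g x ∂(∑ i, c i • ν i) := by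
  rw [integral_finsetSum_measure fun i _ => (hf i).smul_measure (hc i),
    integral_finsetSum_measure fun i _ => (hg i).smul_measure (hc i)]
  refine sum_le_sum fun i _ => ?_
  rw [integral_smul_measure, integral_smul_measure]
  exact smul_le_smul_of_nonneg_left (hfg i) ENNReal.toReal_nonneg

lemma sq_sum_eq_sum_sq_add_sum_offDiag {ι R : Type*} [Fintype ι] [DecidableEq ι] [CommSemiring R]
    (x : ι → R) :
    (∑ i, x i) ^ 2 = ∑ i, x i ^ 2 + ∑ ij ∈ univ.offDiag, x ij.1 * x ij.2 := by
  rw [sq, sum_mul_sum, ← sum_product', ← diag_union_offDiag, sum_union (disjoint_diag_offDiag _),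
    sum_diag]
  simp [sq]

section Kernel

variable {ν : Measure ℝ}

lemma memLp_mul_sub_integral (hν : Integrable (fun y => (y - ∫ y', y' ∂ν) ^ 2) ν) (a : ℝ) :
    MemLp (fun y => a * (y - ∫ y', y' ∂ν)) 2 ν :=
  ((memLp_two_iff_integrable_sq (by fun_prop)).2 hν).const_mul a

variable [IsProbabilityMeasure ν]

lemma integral_sub_integral (hν : Integrable (fun y => (y - ∫ y', y' ∂ν) ^ 2) ν) :
    ∫ y, (y - ∫ y', y' ∂ν) ∂ν = 0 := by
  have hid : Integrable (fun y : ℝ => y) ν := by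
    simpa [sub_eq_add_neg] using (memLp_mul_sub_integral hν 1).integrable one_le_two
  rw [integral_sub hid (integrable_const _)]
  simp

lemma integral_mul_sub_integral (hν : Integrable (fun y => (y - ∫ y', y' ∂ν) ^ 2) ν) (a : ℝ) :
    ∫ y, a * (y - ∫ y', y' ∂ν) ∂ν = 0 := by
  rw [integral_const_mul, integral_sub_integral hν, mul_zero]

lemma variance_mul_sub_integral (hν : Integrable (fun y => (y - ∫ y', y' ∂ν) ^ 2) ν) (a : ℝ) :
    Var[fun y => a * (y - ∫ y', y' ∂ν); ν] = a ^ 2 * ∫ y, (y - ∫ y', y' ∂ν) ^ 2 ∂ν := by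
  rw [variance_const_mul, variance_eq_integral (by fun_prop)]
  simp [integral_sub_integral hν]

end Kernel

lemma integral_ite_one_eq_measureReal {α : Type*} [MeasurableSpace α] {μ : Measure α}
    {p : α → Prop} [DecidablePred p] (hp : MeasurableSet {x | p x}) :
    ∫ x, (if p x then (1 : ℝ) else 0) ∂μ = μ.real {x | p x} := by
  rw [← integral_indicator_one hp]
  simp only [Set.indicator_apply, Set.mem_ofPred_eq, Pi.one_apply]

variable {K N : ℕ}

lemma measurableSet_setOf_labels (p : (Fin N → Fin K) → Prop) :
    MeasurableSet {D : Fin N → Fin K × ℝ | p fun i => (D i).1} :=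
  (by fun_prop : Measurable fun (D : Fin N → Fin K × ℝ) i => (D i).1) (.of_discrete)

lemma integrable_comp_labels {P : Measure (Fin N → Fin K × ℝ)} [IsFiniteMeasure P]
    (g : (Fin N → Fin K) → ℝ) : Integrable (fun D => g fun i => (D i).1) P :=
  Integrable.of_finite.comp_measurable (by fun_prop)

lemma groupMean_sub (z : Fin K) (D : Fin N → Fin K × ℝ) (m : ℝ) :
    groupMean z D - m = ∑ i with (D i).1 = z, ((D i).2 - m) / nObs z D
      - if nObs z D = 0 then m else 0 := by
  unfold groupMean
  split_ifs with h
  · rw [nObs, card_eq_zero] at h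
    simp [h]
  · have : (nObs z D : ℝ) ≠ 0 := by exact_mod_cast h
    rw [← sum_div, sum_sub_distrib, sum_const, nsmul_eq_mul]
    simp only [nObs] at this ⊢
    field_simp
    ring

lemma sum_mul_groupMean_sub (qT m : Fin K → ℝ) (D : Fin N → Fin K × ℝ) :
    ∑ z, qT z * groupMean z D - ∑ z, qT z * m z
      = ∑ i, qT (D i).1 / nObs (D i).1 D * ((D i).2 - m (D i).1)
        - ∑ z, if nObs z D = 0 then qT z * m z else 0 := by
  simp_rw [← sum_sub_distrib, ← mul_sub, groupMean_sub, mul_sub, mul_sum, mul_ite, mul_zero]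
  rw [sum_sub_distrib, ← sum_fiberwise univ (fun i => (D i).1)]
  congr 1
  refine sum_congr rfl fun z _ => sum_congr rfl fun i hi => ?_
  rw [(mem_filter.1 hi).2]
  ring

lemma discMeasure_bind {β : Type*} [MeasurableSpace β] (w : Fin K → ℝ) (f : Fin K → Measure β) :
    (discMeasure w).bind f = ∑ z, ENNReal.ofReal (w z) • f z := by
  ext s hs
  rw [Measure.bind_apply hs Measurable.of_discrete.aemeasurable, discMeasure,
    lintegral_finsetSum_measure, Measure.finsetSum_apply]
  simp [lintegral_dirac]

def withLabels (ζ : Fin N → Fin K) (y : Fin N → ℝ) : Fin N → Fin K × ℝ := fun i => (ζ i, y i)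

lemma nObs_withLabels (z : Fin K) (ζ : Fin N → Fin K) (y : Fin N → ℝ) :
    nObs z (withLabels ζ y) = #{i | ζ i = z} :=
  rfl

lemma measurableEmbedding_withLabels (ζ : Fin N → Fin K) :
    MeasurableEmbedding (withLabels ζ) :=
  (MeasurableEquiv.arrowProdEquivProdArrow _ _ _).symm.measurableEmbedding.comp
    (measurableEmbedding_prodMk_left ζ)

noncomputable def condLaw (κ : Kernel (Fin K) ℝ) (ζ : Fin N → Fin K) :
    Measure (Fin N → Fin K × ℝ) :=
  (Measure.pi fun i => κ (ζ i)).map (withLabels ζ)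

lemma jointLaw_eq_sum_smul_condLaw {M : ℕ} (qsrc : Fin M → Fin K → ℝ) (κ : Kernel (Fin K) ℝ)
    [IsFiniteKernel κ] (src : Fin N → Fin M) :
    jointLaw qsrc κ src
      = ∑ ζ : Fin N → Fin K, (∏ i, ENNReal.ofReal (qsrc (src i) (ζ i))) • condLaw κ ζ := by
  simp only [jointLaw, discMeasure_bind]
  rw [Measure.pi_sum_smul _ (fun _ _ => ENNReal.ofReal_ne_top)]
  refine sum_congr rfl fun ζ _ => ?_
  rw [condLaw, ← Measure.pi_map_pi fun i => measurable_prodMk_left.aemeasurable]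
  rfl

instance isProbabilityMeasure_condLaw (κ : Kernel (Fin K) ℝ) [IsMarkovKernel κ]
    (ζ : Fin N → Fin K) : IsProbabilityMeasure (condLaw κ ζ) :=
  Measure.isProbabilityMeasure_map (measurableEmbedding_withLabels ζ).measurable.aemeasurable

lemma isFiniteMeasure_jointLaw {M : ℕ} (qsrc : Fin M → Fin K → ℝ) (κ : Kernel (Fin K) ℝ)
    [IsMarkovKernel κ] (src : Fin N → Fin M) : IsFiniteMeasure (jointLaw qsrc κ src) := by
  have (ζ : Fin N → Fin K) := (condLaw κ ζ).smul_finite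
    (ENNReal.prod_ne_top (s := univ) fun i _ => ENNReal.ofReal_ne_top (r := qsrc (src i) (ζ i)))
  rw [jointLaw_eq_sum_smul_condLaw]
  infer_instance

section Conditional

variable (κ : Kernel (Fin K) ℝ) (ζ : Fin N → Fin K) (qT : Fin K → ℝ)

lemma estimatorError_withLabels (y : Fin N → ℝ) :
    ∑ z, qT z * groupMean z (withLabels ζ y) - ∑ z, qT z * ∫ t, t ∂κ z
      = ∑ i, qT (ζ i) / #{j | ζ j = ζ i} * (y i - ∫ t, t ∂κ (ζ i))
        + -∑ z, if #{i | ζ i = z} = 0 then qT z * ∫ t, t ∂κ z else 0 := by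
  rw [← sub_eq_add_neg]
  exact sum_mul_groupMean_sub qT (fun z => ∫ t, t ∂κ z) (withLabels ζ y)

variable [IsMarkovKernel κ]

lemma integrable_sq_estimatorError_condLaw
    (hvar_int : ∀ z, Integrable (fun y => (y - ∫ y', y' ∂κ z) ^ 2) (κ z)) :
    Integrable (fun D => (∑ z, qT z * groupMean z D - ∑ z, qT z * ∫ t, t ∂κ z) ^ 2)
      (condLaw κ ζ) := by
  rw [condLaw, (measurableEmbedding_withLabels ζ).integrable_map_iff]
  simp only [Function.comp_def, estimatorError_withLabels]
  exact (memLp_sum_pi_add_const (fun i => memLp_mul_sub_integral (hvar_int (ζ i)) _)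
    _).integrable_sq

lemma integral_sq_estimatorError_condLaw
    (hvar_int : ∀ z, Integrable (fun y => (y - ∫ y', y' ∂κ z) ^ 2) (κ z)) :
    ∫ D, (∑ z, qT z * groupMean z D - ∑ z, qT z * ∫ t, t ∂κ z) ^ 2 ∂condLaw κ ζ
      = ∑ z, qT z ^ 2 * (∫ y, (y - ∫ y', y' ∂κ z) ^ 2 ∂κ z) / #{i | ζ i = z}
        + (∑ z, if #{i | ζ i = z} = 0 then qT z * ∫ t, t ∂κ z else 0) ^ 2 := by
  rw [condLaw, (measurableEmbedding_withLabels ζ).integral_map]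
  simp only [estimatorError_withLabels]
  rw [integral_sq_sum_pi_add_const (fun i => memLp_mul_sub_integral (hvar_int (ζ i)) _)
    (fun i => integral_mul_sub_integral (hvar_int (ζ i)) _), neg_sq]
  simp only [variance_mul_sub_integral (hvar_int _)]
  congr 1
  rw [← sum_fiberwise univ ζ]
  refine sum_congr rfl fun z _ => ?_
  rw [sum_congr rfl fun i hi => by rw [(mem_filter.1 hi).2], sum_const, nsmul_eq_mul]
  rcases eq_or_ne (#{i | ζ i = z} : ℝ) 0 with h | h
  · simp [h]
  · field_simp

end Conditional

noncomputable def riskBound (σ R : ℝ) (qT : Fin K → ℝ) (n : Fin K → ℕ) : ℝ :=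
  ∑ z, qT z ^ 2 * (σ ^ 2 * (if 0 < n z then 1 / (n z : ℝ) else 0)
      + R ^ 2 * (if n z = 0 then 1 else 0))
    + ∑ zz ∈ univ.offDiag, qT zz.1 * qT zz.2 * R ^ 2 * (if n zz.1 = 0 ∧ n zz.2 = 0 then 1 else 0)

lemma integral_riskBound (P : Measure (Fin N → Fin K × ℝ)) [IsFiniteMeasure P]
    (σ R : ℝ) (qT : Fin K → ℝ) :
    ∫ D, riskBound σ R qT (fun z => nObs z D) ∂P
      = (∑ z, qT z ^ 2 * (σ ^ 2 * (∫ D, (if 0 < nObs z D then 1 / (nObs z D : ℝ) else 0) ∂P)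
          + R ^ 2 * (P {D | nObs z D = 0}).toReal))
        + ∑ zz ∈ univ.offDiag, qT zz.1 * qT zz.2 * R ^ 2 *
            (P {D | nObs zz.1 D = 0 ∧ nObs zz.2 D = 0}).toReal := by
  have hzero (z : Fin K) : MeasurableSet {D : Fin N → Fin K × ℝ | nObs z D = 0} :=
    measurableSet_setOf_labels fun ζ => #{i | ζ i = z} = 0
  have hboth (z z' : Fin K) :
      MeasurableSet {D : Fin N → Fin K × ℝ | nObs z D = 0 ∧ nObs z' D = 0} :=
    measurableSet_setOf_labels fun ζ => #{i | ζ i = z} = 0 ∧ #{i | ζ i = z'} = 0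
  have hinv (z : Fin K) : Integrable (fun D => if 0 < nObs z D then 1 / (nObs z D : ℝ) else 0) P :=
    integrable_comp_labels fun ζ => if 0 < #{i | ζ i = z} then 1 / (#{i | ζ i = z} : ℝ) else 0
  have hzero_int (z : Fin K) : Integrable (fun D => if nObs z D = 0 then (1 : ℝ) else 0) P :=
    integrable_comp_labels fun ζ => if #{i | ζ i = z} = 0 then 1 else 0
  have hboth_int (z z' : Fin K) :
      Integrable (fun D => if nObs z D = 0 ∧ nObs z' D = 0 then (1 : ℝ) else 0) P :=
    integrable_comp_labels fun ζ => if #{i | ζ i = z} = 0 ∧ #{i | ζ i = z'} = 0 then 1 else 0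
  unfold riskBound
  beta_reduce
  rw [integral_add (by fun_prop) (by fun_prop), integral_finsetSum _ fun z _ => by fun_prop,
    integral_finsetSum _ fun zz _ => by fun_prop]
  congr 1
  · refine sum_congr rfl fun z _ => ?_
    rw [integral_const_mul, integral_add (by fun_prop) (by fun_prop),
      integral_const_mul, integral_const_mul,
      integral_ite_one_eq_measureReal (hzero z)]
    rfl
  · refine sum_congr rfl fun zz _ => ?_
    rw [integral_const_mul, integral_ite_one_eq_measureReal (hboth zz.1 zz.2)]
    rfl

lemma integral_riskBound_condLaw (κ : Kernel (Fin K) ℝ) [IsMarkovKernel κ] (ζ : Fin N → Fin K)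
    (σ R : ℝ) (qT : Fin K → ℝ) :
    ∫ D, riskBound σ R qT (fun z => nObs z D) ∂condLaw κ ζ
      = riskBound σ R qT fun z => #{i | ζ i = z} := by
  simp [condLaw, (measurableEmbedding_withLabels ζ).integral_map, nObs_withLabels]

lemma condRisk_le_riskBound {σ R : ℝ} {qT m V : Fin K → ℝ} (hqT : ∀ z, 0 ≤ qT z)
    (hm : ∀ z, |m z| ≤ R) (hV : ∀ z, V z ≤ σ ^ 2) (n : Fin K → ℕ) :
    ∑ z, qT z ^ 2 * V z / n z + (∑ z, if n z = 0 then qT z * m z else 0) ^ 2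
      ≤ riskBound σ R qT n := by
  have hvar : ∑ z, qT z ^ 2 * V z / n z
      ≤ ∑ z, qT z ^ 2 * (σ ^ 2 * (if 0 < n z then 1 / (n z : ℝ) else 0)) := by
    refine sum_le_sum fun z _ => ?_
    split_ifs with h
    · rw [mul_one_div, mul_div_assoc]
      gcongr
      exact hV z
    · simp [Nat.eq_zero_of_not_pos h]
  have hbias : |∑ z, if n z = 0 then qT z * m z else 0| ≤ ∑ z, if n z = 0 then qT z * R else 0 :=
    (abs_sum_le_sum_abs _ _).trans <| sum_le_sum fun z _ => by
      split_ifs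
      · rw [abs_mul, abs_of_nonneg (hqT z)]
        exact mul_le_mul_of_nonneg_left (hm z) (hqT z)
      · simp
  have hsq := sq_le_sq' (abs_le.1 hbias).1 (abs_le.1 hbias).2
  rw [sq_sum_eq_sum_sq_add_sum_offDiag fun z => if n z = 0 then qT z * R else 0] at hsq
  unfold riskBound
  simp only [mul_add, sum_add_distrib]
  have hdiag : ∑ z, (if n z = 0 then qT z * R else 0) ^ 2
      = ∑ z, qT z ^ 2 * (R ^ 2 * if n z = 0 then 1 else 0) :=
    sum_congr rfl fun z _ => by split_ifs <;> ring
  have hoff : ∑ zz ∈ univ.offDiag, (if n zz.1 = 0 then qT zz.1 * R else 0)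
        * (if n zz.2 = 0 then qT zz.2 * R else 0)
      = ∑ zz ∈ univ.offDiag, qT zz.1 * qT zz.2 * R ^ 2 *
          (if n zz.1 = 0 ∧ n zz.2 = 0 then 1 else 0) :=
    sum_congr rfl fun zz _ => by split_ifs <;> simp_all; ring
  linarith

theorem post_stratified_risk_bound_general
    {K M N : ℕ} (σ R : ℝ)
    (qsrc : Fin M → Fin K → ℝ)
    (qT : Fin K → ℝ) (hqT : (∀ z, 0 ≤ qT z) ∧ ∑ z, qT z = 1)
    (src : Fin N → Fin M)
    (κ : Kernel (Fin K) ℝ) (hκ : IsMarkovKernel κ)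
    (hmean : ∀ z, |∫ y, y ∂(κ z)| ≤ R)
    (hvar_int : ∀ z, Integrable (fun y => (y - ∫ y', y' ∂(κ z)) ^ 2) (κ z))
    (hvar : ∀ z, ∫ y, (y - ∫ y', y' ∂(κ z)) ^ 2 ∂(κ z) ≤ σ ^ 2) :
    ∫ D, (∑ z, qT z * groupMean z D - ∑ z, qT z * ∫ y, y ∂(κ z)) ^ 2
        ∂(jointLaw qsrc κ src) ≤
      (∑ z, (qT z) ^ 2 *
        (σ ^ 2 * (∫ D, (if 0 < nObs z D then 1 / (nObs z D : ℝ) else 0)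
            ∂(jointLaw qsrc κ src))
          + R ^ 2 * (jointLaw qsrc κ src {D | nObs z D = 0}).toReal))
      + ∑ zz ∈ Finset.univ.offDiag,
          qT zz.1 * qT zz.2 * R ^ 2 *
            (jointLaw qsrc κ src {D | nObs zz.1 D = 0 ∧ nObs zz.2 D = 0}).toReal := by
  have := isFiniteMeasure_jointLaw qsrc κ src
  rw [← integral_riskBound, jointLaw_eq_sum_smul_condLaw]
  refine integral_sum_smul_mono (fun ζ => ENNReal.prod_ne_top fun i _ => ENNReal.ofReal_ne_top)
    (fun ζ => integrable_sq_estimatorError_condLaw κ ζ qT hvar_int)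
    (fun _ => integrable_comp_labels fun ζ => riskBound σ R qT fun z => #{i | ζ i = z}) fun ζ => ?_
  rw [integral_sq_estimatorError_condLaw κ ζ qT hvar_int, integral_riskBound_condLaw]
  exact condRisk_le_riskBound hqT.1 hmean hvar _

/-- Risk bound for the post-stratified estimator
`θ̂_PS(D) = ∑_z q_T(z)·Ȳ_z` of the population mean `∑_z q_T(z)·μ_z`. -/
theorem post_stratified_risk_bound
    {K M N : ℕ} (hK : 1 ≤ K) (hM : 1 ≤ M) (σ R : ℝ)
    (qsrc : Fin M → Fin K → ℝ)
    (hqsrc : ∀ m, (∀ z, 0 ≤ qsrc m z) ∧ ∑ z, qsrc m z = 1)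
    (qT : Fin K → ℝ) (hqT : (∀ z, 0 ≤ qT z) ∧ ∑ z, qT z = 1)
    (n : Fin M → ℕ) (hN : N = ∑ m, n m) (hNpos : 1 ≤ N)
    (src : Fin N → Fin M)
    (hsrc : ∀ m, (Finset.univ.filter fun i => src i = m).card = n m)
    (κ : Kernel (Fin K) ℝ) (hκ : IsMarkovKernel κ)
    (hmean_int : ∀ z, Integrable (fun y => y) (κ z))
    (hmean : ∀ z, |∫ y, y ∂(κ z)| ≤ R)
    (hvar_int : ∀ z, Integrable (fun y => (y - ∫ y', y' ∂(κ z)) ^ 2) (κ z))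
    (hvar : ∀ z, ∫ y, (y - ∫ y', y' ∂(κ z)) ^ 2 ∂(κ z) ≤ σ ^ 2) :
    ∫ D, (∑ z, qT z * groupMean z D - ∑ z, qT z * ∫ y, y ∂(κ z)) ^ 2
        ∂(jointLaw qsrc κ src) ≤
      (∑ z, (qT z) ^ 2 *
        (σ ^ 2 * (∫ D, (if 0 < nObs z D then 1 / (nObs z D : ℝ) else 0)
            ∂(jointLaw qsrc κ src))
          + R ^ 2 * (jointLaw qsrc κ src {D | nObs z D = 0}).toReal))
      + ∑ zz ∈ Finset.univ.offDiag,
          qT zz.1 * qT zz.2 * R ^ 2 *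
            (jointLaw qsrc κ src {D | nObs zz.1 D = 0 ∧ nObs zz.2 D = 0}).toReal :=
  post_stratified_risk_bound_general σ R qsrc qT hqT src κ hκ hmean hvar_int hvar
end
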